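/- Suppose: (D1) every plant i = 1,…,N is reachable, i.e., Ψ_i = [A_i^{d_i−1} b_i, …, A_i b_i, b_i] is invertible; and (D2) there exist integers d̂_i > d_i for i = 1,…,N and pairwise disjoint subsets Q_1,…,Q_p ⊆ {1,…,N} with p ≤ M such that ∪_{j=1}^p Q_j = {1,…,N} and Σ_{i∈Q_j} d̂_i ≤ T for every j = 1,…,p. Enumerate each Q_j as Q_j(1),…,Q_j(|Q_j|); for plant i = Q_j(k) let d̃_i = Σ_{ℓ=1}^{k−1} d̂_{Q_j(ℓ)}, and define the control sequence (u_i(t))_{t=0}^{T−1} by u_i(t) = 0 for t ∉ {d̃_i + d̂_i − d_i, …, d̃_i + d̂_i − 1} and (u_i(d̃_i+d̂_i−d_i), …, u_i(d̃_i+d̂_i−1)) = −Ψ_i^{−1} A_i^{d̂_i} A_i^{d̃_i} ξ_i. Then for every plant i = 1,…,N the trajectory from x_i(0) = ξ_i under (u_i(t))_{t=0}^{T−1} satisfies x_i(T) = 0, and for every t = 0,…,T−1 the vector (u_1(t),…,u_N(t)) ∈ ℝ^N has at most p ≤ M nonzero entries. -/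
import Mathlib


/-- Trajectory of the discrete-time linear plant `x(t+1) = A x(t) + u(t) b` with `x(0) = ξ`. -/
def traj {d : ℕ} (A : Matrix (Fin d) (Fin d) ℝ) (b ξ : Fin d → ℝ) (u : ℕ → ℝ) : ℕ → Fin d → ℝ
  | 0 => ξ
  | t + 1 => A.mulVec (traj A b ξ u t) + u t • b

/-- The ℓ0-"norm" of a vector: the number of its nonzero entries. -/
noncomputable def l0 {n : ℕ} (v : Fin n → ℝ) : ℕ :=
  (Finset.univ.filter fun i => v i ≠ 0).card

lemma traj_eq {d : ℕ} (A : Matrix (Fin d) (Fin d) ℝ) (b ξ : Fin d → ℝ) (u : ℕ → ℝ) (t : ℕ) :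
    traj A b ξ u t = (A ^ t).mulVec ξ + ∑ s ∈ Finset.range t, u s • (A ^ (t - 1 - s)).mulVec b := by
  induction t with
  | zero => simp [traj, Matrix.one_mulVec]
  | succ t ih =>
    rw [show traj A b ξ u (t+1) = A.mulVec (traj A b ξ u t) + u t • b from rfl, ih,
      Finset.sum_range_succ, Matrix.mulVec_add]
    have h1 : A.mulVec ((A ^ t).mulVec ξ) = (A ^ (t+1)).mulVec ξ := by
      rw [Matrix.mulVec_mulVec, ← pow_succ']
    have h2 : A.mulVec (∑ s ∈ Finset.range t, u s • (A ^ (t - 1 - s)).mulVec b)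
        = ∑ s ∈ Finset.range t, u s • (A ^ (t + 1 - 1 - s)).mulVec b := by
      rw [show (A.mulVec : (Fin d → ℝ) → _) = A.mulVecLin from rfl, map_sum]
      refine Finset.sum_congr rfl fun s hs => ?_
      rw [Matrix.mulVecLin_apply, Matrix.mulVec_smul, Matrix.mulVec_mulVec, ← pow_succ']
      have hst := Finset.mem_range.mp hs
      have he : t - 1 - s + 1 = t + 1 - 1 - s := by omega
      rw [he]
    rw [h1, h2]
    simp [add_assoc]

/-- The reachability matrix `Ψ = [A^{d-1} b, A^{d-2} b, …, A b, b]` of a plant `(A, b)`. -/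
def Psi (d : ℕ) (A : Matrix (Fin d) (Fin d) ℝ) (b : Fin d → ℝ) :
    Matrix (Fin d) (Fin d) ℝ :=
  Matrix.of fun j (k : Fin d) => ((A ^ (d - 1 - (k : ℕ))).mulVec b) j

lemma plant_zero {d dh dt T : ℕ} (A : Matrix (Fin d) (Fin d) ℝ) (b ξ : Fin d → ℝ)
    (hreach : IsUnit (Psi d A b)) (hd : d < dh) (hT : dt + dh ≤ T)
    (u : ℕ → ℝ)
    (hu0 : ∀ t, (t < dt + dh - d ∨ dt + dh ≤ t) → u t = 0)
    (hu1 : ∀ k : Fin d, u (dt + dh - d + (k : ℕ))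
      = (-(Psi d A b)⁻¹.mulVec ((A ^ dh).mulVec ((A ^ dt).mulVec ξ))) k) :
    traj A b ξ u T = 0 := by
  rw [traj_eq]
  set v : Fin d → ℝ := -(Psi d A b)⁻¹.mulVec ((A ^ dh).mulVec ((A ^ dt).mulVec ξ)) with hv
  have hsum1 : ∑ s ∈ Finset.range T, u s • (A ^ (T - 1 - s)).mulVec b
      = ∑ s ∈ Finset.Ico (dt + dh - d) (dt + dh), u s • (A ^ (T - 1 - s)).mulVec b := by
    refine (Finset.sum_subset ?_ ?_).symm
    · intro x hx
      rw [Finset.mem_Ico] at hx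
      rw [Finset.mem_range]; omega
    · intro x hx hnx
      rw [Finset.mem_Ico] at hnx
      rw [hu0 x (by omega), zero_smul]
  have hsum2 : ∑ s ∈ Finset.Ico (dt + dh - d) (dt + dh), u s • (A ^ (T - 1 - s)).mulVec b
      = ∑ k ∈ Finset.range d, u (dt + dh - d + k) • (A ^ (T - 1 - (dt + dh - d + k))).mulVec b := by
    rw [Finset.sum_Ico_eq_sum_range]
    have h : dt + dh - (dt + dh - d) = d := by omega
    rw [h]
  have hsum3 : ∑ k ∈ Finset.range d, u (dt + dh - d + k) • (A ^ (T - 1 - (dt + dh - d + k))).mulVec b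
      = ∑ k : Fin d, v k • (A ^ (T - (dt + dh))).mulVec ((A ^ (d - 1 - (k:ℕ))).mulVec b) := by
    rw [← Fin.sum_univ_eq_sum_range]
    refine Finset.sum_congr rfl fun k _ => ?_
    have hk : (k : ℕ) < d := k.isLt
    have h : T - 1 - (dt + dh - d + (k:ℕ)) = T - (dt + dh) + (d - 1 - (k:ℕ)) := by omega
    rw [hu1 k, h, Matrix.mulVec_mulVec, ← pow_add]
  have hsum4 : ∑ k : Fin d, v k • (A ^ (T - (dt + dh))).mulVec ((A ^ (d - 1 - (k:ℕ))).mulVec b)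
      = (A ^ (T - (dt + dh))).mulVec ((Psi d A b).mulVec v) := by
    rw [show ((Psi d A b).mulVec v) = ∑ k : Fin d, v k • (A ^ (d - 1 - (k:ℕ))).mulVec b from ?_]
    · rw [show ((A ^ (T-(dt+dh))).mulVec : (Fin d → ℝ) → _) = (A ^ (T-(dt+dh))).mulVecLin from rfl,
        map_sum]
      refine Finset.sum_congr rfl fun k _ => ?_
      rw [map_smul, Matrix.mulVecLin_apply]
    · funext j
      rw [Matrix.mulVec]
      simp [Psi, dotProduct, Finset.sum_apply, mul_comm]
  have hPv : (Psi d A b).mulVec v = -((A ^ dh).mulVec ((A ^ dt).mulVec ξ)) := by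
    rw [hv, Matrix.mulVec_neg, Matrix.mulVec_mulVec,
      Matrix.mul_nonsing_inv _ ((Matrix.isUnit_iff_isUnit_det _).mp hreach), Matrix.one_mulVec]
  rw [hsum1, hsum2, hsum3, hsum4, hPv, Matrix.mulVec_neg, Matrix.mulVec_mulVec,
    Matrix.mulVec_mulVec, ← pow_add, ← pow_add]
  have hTe : T - (dt + dh) + dh + dt = T := by omega
  rw [hTe, add_neg_cancel]

/-- under conditions (D1)-(D2), the control logic constructed by
Algorithm 3 (plants of each group `Q_j` handled consecutively, plant `Q_j(k)` using the
last `d_i` instants of its slot of length `d̂_i`, with values `-Ψ_i⁻¹ A_i^{d̂_i} A_i^{d̃_i} ξ_i`)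
steers every plant's initial state to `0` at time `T` and has at most `p ≤ M` nonzero
entries at every time instant. -/
theorem stmt10
    (N M : ℕ) (hM : 0 < M) (hMN : M < N)
    (T : ℕ)
    (d : Fin N → ℕ)
    (A : ∀ i, Matrix (Fin (d i)) (Fin (d i)) ℝ)
    (b : ∀ i, Fin (d i) → ℝ)
    (ξ : ∀ i, Fin (d i) → ℝ)
    -- (D1) every plant is reachable
    (hreach : ∀ i, IsUnit (Psi (d i) (A i) (b i)))
    -- (D2)
    (dhat : Fin N → ℕ) (hdim : ∀ i, d i < dhat i)
    (p : ℕ) (hp : p ≤ M)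
    (Q : Fin p → Finset (Fin N))
    (hQdisj : ∀ m n, m ≠ n → Disjoint (Q m) (Q n))
    (hQcover : (Finset.univ : Finset (Fin p)).biUnion Q = Finset.univ)
    (hhorizon : ∀ j, ∑ i ∈ Q j, dhat i ≤ T)
    -- an enumeration Q_j(1), …, Q_j(|Q_j|) of each Q_j
    (σ : ∀ j : Fin p, Fin ((Q j).card) → Fin N)
    (hσinj : ∀ j, Function.Injective (σ j))
    (hσmem : ∀ j k, σ j k ∈ Q j)
    -- the partial sums d̃_{Q_j(k)} = Σ_{ℓ<k} d̂_{Q_j(ℓ)}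
    (dtil : Fin N → ℕ)
    (hdtil : ∀ j k, dtil (σ j k) = ∑ l ∈ Finset.Iio k, dhat (σ j l))
    -- the control logic of Algorithm 3
    (u : Fin N → ℕ → ℝ)
    (hu0 : ∀ i : Fin N, ∀ t,
      (t < dtil i + dhat i - d i ∨ dtil i + dhat i ≤ t) → u i t = 0)
    (hu1 : ∀ i : Fin N, ∀ k : Fin (d i),
      u i (dtil i + dhat i - d i + (k : ℕ))
        = (-(Psi (d i) (A i) (b i))⁻¹.mulVec
            ((A i ^ dhat i).mulVec ((A i ^ dtil i).mulVec (ξ i)))) k) :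
    (∀ i, traj (A i) (b i) (ξ i) (u i) T = 0) ∧
      (∀ t < T, l0 (fun i => u i t) ≤ p) := by
  -- every i lies in some group
  have hcov : ∀ i : Fin N, ∃ j, i ∈ Q j := by
    intro i
    have : i ∈ (Finset.univ : Finset (Fin p)).biUnion Q := by
      rw [hQcover]; exact Finset.mem_univ i
    rcases Finset.mem_biUnion.mp this with ⟨j, _, hj⟩
    exact ⟨j, hj⟩
  -- σ j is surjective onto Q j
  have hσsurj : ∀ j, ∀ i ∈ Q j, ∃ k, σ j k = i := by
    intro j i hi
    have himg : (Finset.univ.image (σ j)) = Q j := by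
      apply Finset.eq_of_subset_of_card_le
      · intro x hx
        rcases Finset.mem_image.mp hx with ⟨k, _, hk⟩
        exact hk ▸ hσmem j k
      · rw [Finset.card_image_of_injective _ (hσinj j), Finset.card_univ, Fintype.card_fin]
    rcases Finset.mem_image.mp (himg ▸ hi) with ⟨k, _, hk⟩
    exact ⟨k, hk⟩
  -- slot end ≤ sum over the group
  have hslot : ∀ j k, dtil (σ j k) + dhat (σ j k) ≤ ∑ i ∈ Q j, dhat i := by
    intro j k
    rw [hdtil j k]
    have h1 : ∑ l ∈ Finset.Iio k, dhat (σ j l) + dhat (σ j k)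
        = ∑ l ∈ Finset.Iic k, dhat (σ j l) := by
      rw [show Finset.Iic k = insert k (Finset.Iio k) from ?_, Finset.sum_insert (by simp)]
      · ring
      · ext x; simp [Finset.mem_Iic, Finset.mem_Iio, le_iff_lt_or_eq, or_comm]
    rw [h1]
    calc ∑ l ∈ Finset.Iic k, dhat (σ j l)
        = ∑ i ∈ (Finset.Iic k).image (σ j), dhat i :=
          (Finset.sum_image fun x _ y _ h => hσinj j h).symm
      _ ≤ ∑ i ∈ Q j, dhat i := by
          apply Finset.sum_le_sum_of_subset
          intro x hx
          rcases Finset.mem_image.mp hx with ⟨l, _, hl⟩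
          exact hl ▸ hσmem j l
  have hend : ∀ i : Fin N, dtil i + dhat i ≤ T := by
    intro i
    rcases hcov i with ⟨j, hij⟩
    rcases hσsurj j i hij with ⟨k, hk⟩
    calc dtil i + dhat i = dtil (σ j k) + dhat (σ j k) := by rw [hk]
      _ ≤ ∑ i ∈ Q j, dhat i := hslot j k
      _ ≤ T := hhorizon j
  -- slot monotonicity within a group
  have hmono : ∀ j (k1 k2 : Fin (Q j).card), k1 < k2 →
      dtil (σ j k1) + dhat (σ j k1) ≤ dtil (σ j k2) := by
    intro j k1 k2 hlt
    rw [hdtil j k1, hdtil j k2]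
    have h1 : ∑ l ∈ Finset.Iio k1, dhat (σ j l) + dhat (σ j k1)
        = ∑ l ∈ Finset.Iic k1, dhat (σ j l) := by
      rw [show Finset.Iic k1 = insert k1 (Finset.Iio k1) from ?_, Finset.sum_insert (by simp)]
      · ring
      · ext x; simp [Finset.mem_Iic, Finset.mem_Iio, le_iff_lt_or_eq, or_comm]
    rw [h1]
    apply Finset.sum_le_sum_of_subset
    intro x hx
    rw [Finset.mem_Iio]
    exact lt_of_le_of_lt (Finset.mem_Iic.mp hx) hlt
  constructor
  · intro i
    exact plant_zero (A i) (b i) (ξ i) (hreach i) (hdim i) (hend i) (u i) (hu0 i) (hu1 i)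
  · intro t ht
    -- choose the group of each plant
    choose g hg using hcov
    rw [l0]
    have : (Finset.univ.filter fun i => u i t ≠ 0).card
        ≤ (Finset.univ : Finset (Fin p)).card := by
      apply Finset.card_le_card_of_injOn g (fun _ _ => Finset.mem_univ _)
      intro i1 h1 i2 h2 hgeq
      rw [Finset.mem_coe, Finset.mem_filter] at h1 h2
      -- nonzero control forces t in the plant's slot
      have hwin : ∀ i : Fin N, u i t ≠ 0 → dtil i ≤ t ∧ t < dtil i + dhat i := by
        intro i hi
        by_contra hcon
        have : t < dtil i + dhat i - d i ∨ dtil i + dhat i ≤ t := by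
          have := hdim i
          omega
        exact hi (hu0 i t this)
      have hw1 := hwin i1 h1.2
      have hw2 := hwin i2 h2.2
      have hi2Q : i2 ∈ Q (g i1) := hgeq ▸ hg i2
      rcases hσsurj (g i1) i1 (hg i1) with ⟨k1, hk1⟩
      rcases hσsurj (g i1) i2 hi2Q with ⟨k2, hk2⟩
      rcases lt_trichotomy k1 k2 with h | h | h
      · have := hmono (g i1) k1 k2 h
        rw [hk1, hk2] at this
        omega
      · rw [← hk1, ← hk2, h]
      · have := hmono (g i1) k2 k1 h
        rw [hk1, hk2] at this
        omega
    rw [Finset.card_univ, Fintype.card_fin] at this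
    exact this
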